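/- Let m̃ be the Fourier transform of the unit-mass surface measure of the sphere of radius R in ℝ^N, N ≥ 3. For each integer α ≥ 1 and each constant C > 1, there is a constant C' < 1 depending only on C (and N) such that whenever 1 ≤ 2πR|ζ| ≤ C and 0 < r ≤ 2, |(d/dr)^α m̃(rζ)| ≤ C' (2πR|ζ|)^{2α}. -/

import Mathlib

/-!
Write `w(t) = (1 - t²)^((N-3)/2)` on `[-1, 1]`. Since `‖s • ζ‖ = |s| ‖ζ‖` and `𝓕 w` is even,
`m̃(s ζ) = c_N 𝓕 w (R ‖ζ‖ s)` for every real `s`, so the `α`-th derivative in `s` is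
`c_N (R ‖ζ‖)^α` times the Fourier transform of `(-2πi t)^α w(t)`. Its modulus is at most
`(2π)^α ∫ |t|^α w ≤ (2π)^α ∫ |t| w = (2π)^α · 2/(N-1)` because `α ≥ 1`, and
`(2πR‖ζ‖)^α ≤ (2πR‖ζ‖)^(2α)` because `2πR‖ζ‖ ≥ 1`. So `C' = 2 c_N / (N-1)` works, and with
`x = (N-1)/2` the log-convexity bound `Γ(x + 1/2) ≤ Γ(x) √x` gives `C' ≤ 1/√(π x) < 1`.
-/

open MeasureTheory Real intervalIntegral

/-- The Fourier transform of the unit-mass surface measure of the sphere of radius `R`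
in `ℝ^N`, given by `m̃(ζ) = (Γ(N/2)/(Γ((N-1)/2)√π)) ∫_{-1}^1 e^{2πiR|ζ|t}(1-t²)^{(N-3)/2} dt`. -/
noncomputable def sphereFT (N : ℕ) (R : ℝ) (ζ : EuclideanSpace ℝ (Fin N)) : ℂ :=
  ((Real.Gamma ((N:ℝ)/2) / (Real.Gamma (((N:ℝ) - 1)/2) * Real.sqrt π)) : ℝ) *
    ∫ t in (-1:ℝ)..1,
      Complex.exp (2 * (π:ℂ) * Complex.I * (R * ‖ζ‖ * t : ℝ)) *
        ((1 - t^2 : ℝ) ^ (((N:ℝ) - 3)/2) : ℝ)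

open Set FourierTransform

theorem Real.Gamma_add_half_le_mul_sqrt {x : ℝ} (hx : 0 < x) :
    Gamma (x + 1 / 2) ≤ Gamma x * √x := by
  have hconv := Gamma_mul_add_mul_le_rpow_Gamma_mul_rpow_Gamma hx (by linarith : 0 < x + 1)
    (by norm_num : (0:ℝ) < 1 / 2) (by norm_num : (0:ℝ) < 1 / 2) (by norm_num)
  rw [Gamma_add_one hx.ne', ← sqrt_eq_rpow, ← sqrt_eq_rpow, sqrt_mul hx.le] at hconv
  calc Gamma (x + 1 / 2) = Gamma (1 / 2 * x + 1 / 2 * (x + 1)) := by ring_nf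
    _ ≤ √(Gamma x) * (√x * √(Gamma x)) := hconv
    _ = Gamma x * √x := by
      rw [mul_left_comm, mul_self_sqrt (Gamma_pos_of_pos hx).le, mul_comm]

noncomputable def sphereFTConst (N : ℕ) : ℝ :=
  Gamma ((N:ℝ) / 2) / (Gamma (((N:ℝ) - 1) / 2) * √π)

theorem sphereFTConst_pos {N : ℕ} (hN : 2 ≤ N) : 0 < sphereFTConst N := by
  have hN' : (2:ℝ) ≤ N := by exact_mod_cast hN
  have := Gamma_pos_of_pos (by linarith : (0:ℝ) < N / 2)
  have := Gamma_pos_of_pos (by linarith : (0:ℝ) < (N - 1) / 2)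
  unfold sphereFTConst
  positivity

theorem two_div_mul_sphereFTConst_lt_one {N : ℕ} (hN : 3 ≤ N) :
    2 / ((N:ℝ) - 1) * sphereFTConst N < 1 := by
  have hN' : (3:ℝ) ≤ N := by exact_mod_cast hN
  obtain ⟨x, hx, hNx⟩ : ∃ x : ℝ, 1 ≤ x ∧ (N:ℝ) = 2 * x + 1 :=
    ⟨((N:ℝ) - 1) / 2, by linarith, by ring⟩
  have hΓ : 0 < Gamma x := Gamma_pos_of_pos (by linarith)
  have hπ : 1 < √π := by rw [lt_sqrt zero_le_one]; linarith [pi_gt_three]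
  rw [sphereFTConst, hNx, show 2 * x + 1 - 1 = 2 * x by ring,
    show (2 * x + 1) / 2 = x + 1 / 2 by ring, show 2 * x / 2 = x by ring, div_mul_div_comm,
    div_lt_one (by positivity)]
  calc 2 * Gamma (x + 1 / 2) ≤ 2 * (Gamma x * √x) := by
        gcongr; exact Gamma_add_half_le_mul_sqrt (by linarith)
    _ ≤ 2 * (Gamma x * x) := by gcongr; exact sqrt_le_self_iff.2 (Or.inr hx)
    _ < 2 * x * (Gamma x * √π) := by nlinarith [mul_pos hΓ (by linarith : (0:ℝ) < x)]

theorem continuous_one_sub_sq_rpow {p : ℝ} (hp : 0 ≤ p) :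
    Continuous fun x : ℝ => (1 - x ^ 2) ^ p :=
  (continuous_const.sub (continuous_pow 2)).rpow_const fun _ => Or.inr hp

theorem integral_mul_one_sub_sq_rpow {p : ℝ} (hp : 0 ≤ p) :
    ∫ x in (0:ℝ)..1, x * (1 - x ^ 2) ^ p = 1 / (2 * (p + 1)) := by
  have hderiv : ∀ x ∈ uIcc (0:ℝ) 1, HasDerivAt (fun x => -(1 - x ^ 2) ^ (p + 1) / (2 * (p + 1)))
      (x * (1 - x ^ 2) ^ p) x := by
    intro x _
    refine ((((hasDerivAt_pow 2 x).const_sub 1).rpow_const (p := p + 1)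
      (Or.inr (by linarith))).neg.div_const (2 * (p + 1))).congr_deriv ?_
    rw [add_sub_cancel_right]
    field_simp
    ring
  rw [integral_eq_sub_of_hasDerivAt hderiv
    ((continuous_id.mul (continuous_one_sub_sq_rpow hp)).intervalIntegrable _ _)]
  norm_num [zero_rpow (by linarith : p + 1 ≠ 0)]
  field_simp

theorem integral_abs_mul_one_sub_sq_rpow {p : ℝ} (hp : 0 ≤ p) :
    ∫ x in (-1:ℝ)..1, |x| * (1 - x ^ 2) ^ p = 1 / (p + 1) := by
  set f : ℝ → ℝ := fun x => |x| * (1 - x ^ 2) ^ p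
  have hf : Continuous f := continuous_abs.mul (continuous_one_sub_sq_rpow hp)
  have heven : ∫ x in (-1:ℝ)..0, f x = ∫ x in (0:ℝ)..1, f x := by
    simpa [f] using (integral_comp_neg f (a := 0) (b := 1)).symm
  have hpos : ∫ x in (0:ℝ)..1, f x = ∫ x in (0:ℝ)..1, x * (1 - x ^ 2) ^ p :=
    integral_congr fun x hx => by
      rw [uIcc_of_le zero_le_one] at hx
      simp [f, abs_of_nonneg hx.1]
  rw [← integral_add_adjacent_intervals (hf.intervalIntegrable (-1) 0) (hf.intervalIntegrable 0 1),
    heven, hpos, integral_mul_one_sub_sq_rpow hp]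
  field_simp
  ring

/-- For `p = (N - 3) / 2` this is, up to normalization, the density of one coordinate of the
uniform measure on the unit sphere of `ℝ^N`. -/
noncomputable def sphereWeight (p : ℝ) : ℝ → ℂ :=
  (Icc (-1:ℝ) 1).indicator fun t => (((1 - t ^ 2) ^ p : ℝ) : ℂ)

theorem sphereWeight_neg (p x : ℝ) : sphereWeight p (-x) = sphereWeight p x := by
  have hmem : -x ∈ Icc (-1:ℝ) 1 ↔ x ∈ Icc (-1:ℝ) 1 := by
    simp only [mem_Icc, neg_le, neg_neg]; tauto
  by_cases hx : x ∈ Icc (-1:ℝ) 1 <;> simp [sphereWeight, hx, hmem]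

theorem integrable_pow_smul_sphereWeight {p : ℝ} (hp : 0 ≤ p) (n : ℕ) :
    Integrable fun x : ℝ => x ^ n • sphereWeight p x := by
  rw [sphereWeight, ← indicator_smul, integrable_indicator_iff measurableSet_Icc]
  exact ((continuous_pow n).smul
    (Complex.continuous_ofReal.comp (continuous_one_sub_sq_rpow hp))).integrableOn_Icc

theorem fourier_sphereWeight_neg (p u : ℝ) :
    𝓕 (sphereWeight p) (-u) = 𝓕 (sphereWeight p) u := by
  have heven : sphereWeight p ∘ LinearIsometryEquiv.neg ℝ = sphereWeight p :=
    funext (sphereWeight_neg p)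
  rw [← heven, Real.fourier_comp_linearIsometry, heven]
  simp

theorem fourier_sphereWeight (p u : ℝ) :
    𝓕 (sphereWeight p) u = ∫ t in (-1:ℝ)..1,
      Complex.exp (2 * π * Complex.I * ((-u * t : ℝ) : ℂ)) * (((1 - t ^ 2) ^ p : ℝ) : ℂ) := by
  rw [Real.fourier_real_eq_integral_exp_smul, integral_of_le (by norm_num),
    ← integral_Icc_eq_integral_Ioc, ← MeasureTheory.integral_indicator measurableSet_Icc]
  congr 1 with v
  rw [sphereWeight, smul_eq_mul, indicator_mul_right]
  congr 2
  push_cast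
  ring_nf

theorem sphereFT_smul (N : ℕ) (R : ℝ) (ζ : EuclideanSpace ℝ (Fin N)) (s : ℝ) :
    sphereFT N R (s • ζ)
      = sphereFTConst N * 𝓕 (sphereWeight (((N:ℝ) - 3) / 2)) (R * ‖ζ‖ * s) := by
  have habs : sphereFT N R (s • ζ)
      = sphereFTConst N * 𝓕 (sphereWeight (((N:ℝ) - 3) / 2)) (-(R * ‖ζ‖ * |s|)) := by
    rw [fourier_sphereWeight, sphereFT, sphereFTConst, norm_smul, norm_eq_abs]
    congr 1
    refine integral_congr fun t _ => ?_
    ring_nf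
  rcases le_or_gt 0 s with hs | hs
  · rw [habs, abs_of_nonneg hs, fourier_sphereWeight_neg]
  · rw [habs, abs_of_neg hs, mul_neg, neg_neg]

theorem integral_norm_pow_smul_sphereWeight_le {p : ℝ} (hp : 0 ≤ p) {n : ℕ} (hn : 1 ≤ n) :
    ∫ x : ℝ, ‖(-2 * π * Complex.I * x) ^ n • sphereWeight p x‖ ≤ (2 * π) ^ n / (p + 1) := by
  have hnorm : (fun x : ℝ => ‖(-2 * π * Complex.I * x) ^ n • sphereWeight p x‖)
      = (Icc (-1:ℝ) 1).indicator fun x => (2 * π) ^ n * (|x| ^ n * (1 - x ^ 2) ^ p) := by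
    ext x
    by_cases hx : x ∈ Icc (-1:ℝ) 1
    · have hx2 : 0 ≤ 1 - x ^ 2 := by nlinarith [hx.1, hx.2]
      simp [sphereWeight, hx, abs_of_pos pi_pos, abs_of_nonneg (rpow_nonneg hx2 p), mul_pow]
      ring
    · simp [sphereWeight, hx]
  rw [hnorm, MeasureTheory.integral_indicator measurableSet_Icc]
  calc ∫ x in Icc (-1:ℝ) 1, (2 * π) ^ n * (|x| ^ n * (1 - x ^ 2) ^ p)
      ≤ ∫ x in Icc (-1:ℝ) 1, (2 * π) ^ n * (|x| * (1 - x ^ 2) ^ p) := by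
        refine setIntegral_mono_on ?_ ?_ measurableSet_Icc fun x hx => ?_
        · exact (continuous_const.mul ((continuous_abs.pow n).mul
            (continuous_one_sub_sq_rpow hp))).integrableOn_Icc
        · exact (continuous_const.mul (continuous_abs.mul
            (continuous_one_sub_sq_rpow hp))).integrableOn_Icc
        have hx2 : 0 ≤ 1 - x ^ 2 := by nlinarith [hx.1, hx.2]
        gcongr
        exact pow_le_of_le_one (abs_nonneg x) (abs_le.2 hx) (by omega)
    _ = (2 * π) ^ n * ∫ x in (-1:ℝ)..1, |x| * (1 - x ^ 2) ^ p := by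
        rw [MeasureTheory.integral_const_mul, integral_of_le (by norm_num),
          integral_Icc_eq_integral_Ioc]
    _ = (2 * π) ^ n / (p + 1) := by
        rw [integral_abs_mul_one_sub_sq_rpow hp, mul_one_div]

theorem norm_iteratedDeriv_fourier_sphereWeight_le {p : ℝ} (hp : 0 ≤ p) {n : ℕ} (hn : 1 ≤ n)
    (u : ℝ) : ‖iteratedDeriv n (𝓕 (sphereWeight p)) u‖ ≤ (2 * π) ^ n / (p + 1) := by
  rw [Real.iteratedDeriv_fourier (N := n) (fun k _ => integrable_pow_smul_sphereWeight hp k)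
    le_rfl]
  exact (VectorFourier.norm_fourierIntegral_le_integral_norm _ _ _ _ _).trans
    (integral_norm_pow_smul_sphereWeight_le hp hn)

theorem contDiff_fourier_sphereWeight {p : ℝ} (hp : 0 ≤ p) :
    ContDiff ℝ (⊤ : ℕ∞) (𝓕 (sphereWeight p)) :=
  Real.contDiff_fourier fun n _ => by
    simpa only [norm_smul, norm_pow] using (integrable_pow_smul_sphereWeight hp n).norm

theorem iteratedDeriv_sphereFT_smul {N : ℕ} (hN : 3 ≤ N) (R : ℝ) (ζ : EuclideanSpace ℝ (Fin N))
    (n : ℕ) (r : ℝ) :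
    iteratedDeriv n (fun s => sphereFT N R (s • ζ)) r
      = sphereFTConst N * ((R * ‖ζ‖) ^ n
        • iteratedDeriv n (𝓕 (sphereWeight (((N:ℝ) - 3) / 2))) (R * ‖ζ‖ * r)) := by
  have hp : 0 ≤ ((N:ℝ) - 3) / 2 := by
    have : (3:ℝ) ≤ N := by exact_mod_cast hN
    linarith
  have hsmooth : ContDiff ℝ n (𝓕 (sphereWeight (((N:ℝ) - 3) / 2))) :=
    (contDiff_fourier_sphereWeight hp).of_le (WithTop.coe_le_coe.2 le_top)
  simp_rw [sphereFT_smul, iteratedDeriv_const_mul_field, iteratedDeriv_comp_const_smul hsmooth]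

theorem norm_iteratedDeriv_sphereFT_smul_le {N : ℕ} (hN : 3 ≤ N) (R : ℝ)
    (ζ : EuclideanSpace ℝ (Fin N)) {n : ℕ} (hn : 1 ≤ n) (r : ℝ) :
    ‖iteratedDeriv n (fun s => sphereFT N R (s • ζ)) r‖
      ≤ 2 / ((N:ℝ) - 1) * sphereFTConst N * (2 * π * |R * ‖ζ‖|) ^ n := by
  have hN' : (3:ℝ) ≤ N := by exact_mod_cast hN
  have hc := (sphereFTConst_pos (by omega : 2 ≤ N)).le
  rw [iteratedDeriv_sphereFT_smul hN, norm_mul, norm_smul, Complex.norm_real, norm_of_nonneg hc,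
    norm_pow, norm_eq_abs]
  calc sphereFTConst N * (|R * ‖ζ‖| ^ n
        * ‖iteratedDeriv n (𝓕 (sphereWeight (((N:ℝ) - 3) / 2))) (R * ‖ζ‖ * r)‖)
      ≤ sphereFTConst N * (|R * ‖ζ‖| ^ n * ((2 * π) ^ n / (((N:ℝ) - 3) / 2 + 1))) := by
        gcongr
        exact norm_iteratedDeriv_fourier_sphereWeight_le (by linarith) hn _
    _ = 2 / ((N:ℝ) - 1) * sphereFTConst N * (2 * π * |R * ‖ζ‖|) ^ n := by
        field_simp
        ring

theorem sphereFT_deriv_intermediate_bound_general (N : ℕ) (hN : 3 ≤ N) (R : ℝ)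
    (α : ℕ) (hα : 1 ≤ α) (C : ℝ) :
    ∃ C' : ℝ, C' < 1 ∧
      ∀ ζ : EuclideanSpace ℝ (Fin N), ∀ r : ℝ,
        1 ≤ 2 * π * R * ‖ζ‖ → 2 * π * R * ‖ζ‖ ≤ C → 0 < r → r ≤ 2 →
          ‖iteratedDeriv α (fun s : ℝ => sphereFT N R (s • ζ)) r‖
            ≤ C' * (2 * π * R * ‖ζ‖) ^ (2 * α) := by
  set C' := 2 / ((N:ℝ) - 1) * sphereFTConst N
  have hC' : 0 ≤ C' := by
    have hN' : (3:ℝ) ≤ N := by exact_mod_cast hN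
    exact mul_nonneg (div_nonneg zero_le_two (by linarith)) (sphereFTConst_pos (by omega)).le
  refine ⟨C', two_div_mul_sphereFTConst_lt_one hN, fun ζ r hX _ _ _ => ?_⟩
  have hRζ : 0 < R * ‖ζ‖ :=
    pos_of_mul_pos_right (by rw [← mul_assoc]; linarith) (by positivity : (0:ℝ) ≤ 2 * π)
  have hbound := norm_iteratedDeriv_sphereFT_smul_le hN R ζ hα r
  rw [abs_of_pos hRζ, ← mul_assoc] at hbound
  calc ‖iteratedDeriv α (fun s : ℝ => sphereFT N R (s • ζ)) r‖
      ≤ C' * (2 * π * R * ‖ζ‖) ^ α := hbound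
    _ ≤ C' * (2 * π * R * ‖ζ‖) ^ (2 * α) :=
        mul_le_mul_of_nonneg_left (pow_le_pow_right₀ hX (by omega)) hC'

/-- Intermediate-range derivative bound: for each `α ≥ 1` and `C > 1` there is `C' < 1`
(depending only on `C` and `N`) such that for `1 ≤ 2πR|ζ| ≤ C` and `0 < r ≤ 2`,
`|(d/dr)^α m̃(rζ)| ≤ C' (2πR|ζ|)^{2α}`. -/
theorem sphereFT_deriv_intermediate_bound (N : ℕ) (hN : 3 ≤ N) (R : ℝ) (hR : 0 < R)
    (hRsurf : R ^ (N - 1) = Real.Gamma ((N:ℝ)/2) / (2 * (π : ℝ) ^ ((N:ℝ)/2)))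
    (α : ℕ) (hα : 1 ≤ α) (C : ℝ) (hC : 1 < C) :
    ∃ C' : ℝ, C' < 1 ∧
      ∀ ζ : EuclideanSpace ℝ (Fin N), ∀ r : ℝ,
        1 ≤ 2 * π * R * ‖ζ‖ → 2 * π * R * ‖ζ‖ ≤ C → 0 < r → r ≤ 2 →
          ‖iteratedDeriv α (fun s : ℝ => sphereFT N R (s • ζ)) r‖
            ≤ C' * (2 * π * R * ‖ζ‖) ^ (2 * α) :=
  sphereFT_deriv_intermediate_bound_general N hN R α hα C
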